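/- arXiv:1612.05030 — 3 statements merged into one kernel-verified Lean document; each statement's English description precedes it below -/
import Mathlib

section
/- If a deterministic complete safety automaton A_φ (with all states reachable from q0, and q0 ≠ qv) satisfies the enforceability condition — every non-violating state has at least one transition to a non-violating state — then there exists an enforcer for the property φ it defines, i.e., a function E : Σ* → Σ* satisfying soundness (E(σ) ∈ L(A_φ) for all σ), monotonicity (σ ≼ σ' implies E(σ) ≼ E(σ')), and instantaneity (|E(σ)| = |σ|). -/
/-- Extension of a transition relation to words. -/
def TrW {Q A : Type} (Tr : Q → A → Q → Prop) : Q → List A → Q → Prop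
  | q, [], q' => q = q'
  | q, a :: w, q' => ∃ q'', Tr q a q'' ∧ TrW Tr q'' w q'

open Classical in
/-- Choose one safe step from a non-violating state, preferring letter `a`. -/
noncomputable def enfStep {Q SI SO : Type} (qv : Q) (Tr : Q → SI × SO → Q → Prop)
    (henfco : ∀ q : Q, q ≠ qv → ∃ a : SI × SO, ∃ q', Tr q a q' ∧ q' ≠ qv)
    (q : Q) (hq : q ≠ qv) (a : SI × SO) :
    {p : (SI × SO) × Q // Tr q p.1 p.2 ∧ p.2 ≠ qv} :=
  if h : ∃ q', Tr q a q' ∧ q' ≠ qv then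
    ⟨(a, Classical.choose h), (Classical.choose_spec h).1, (Classical.choose_spec h).2⟩
  else
    ⟨(Classical.choose (henfco q hq),
      Classical.choose (Classical.choose_spec (henfco q hq))),
      Classical.choose_spec (Classical.choose_spec (henfco q hq))⟩

/-- Run the enforcer from state `q`. -/
noncomputable def enfRun {Q SI SO : Type} (qv : Q) (Tr : Q → SI × SO → Q → Prop)
    (henfco : ∀ q : Q, q ≠ qv → ∃ a : SI × SO, ∃ q', Tr q a q' ∧ q' ≠ qv) :
    (q : Q) → q ≠ qv → List (SI × SO) → List (SI × SO)
  | _, _, [] => []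
  | q, hq, a :: w =>
    (enfStep qv Tr henfco q hq a).1.1 ::
      enfRun qv Tr henfco (enfStep qv Tr henfco q hq a).1.2
        (enfStep qv Tr henfco q hq a).2.2 w

theorem enfRun_sound {Q SI SO : Type} (qv : Q) (Tr : Q → SI × SO → Q → Prop)
    (henfco : ∀ q : Q, q ≠ qv → ∃ a : SI × SO, ∃ q', Tr q a q' ∧ q' ≠ qv) :
    ∀ (σ : List (SI × SO)) (q : Q) (hq : q ≠ qv),
    ∃ q', TrW Tr q (enfRun qv Tr henfco q hq σ) q' ∧ q' ≠ qv
  | [], q, hq => ⟨q, rfl, hq⟩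
  | a :: w, q, hq => by
    obtain ⟨q', h1, h2⟩ :=
      enfRun_sound qv Tr henfco w (enfStep qv Tr henfco q hq a).1.2
        (enfStep qv Tr henfco q hq a).2.2
    exact ⟨q', ⟨_, (enfStep qv Tr henfco q hq a).2.1, h1⟩, h2⟩

theorem enfRun_length {Q SI SO : Type} (qv : Q) (Tr : Q → SI × SO → Q → Prop)
    (henfco : ∀ q : Q, q ≠ qv → ∃ a : SI × SO, ∃ q', Tr q a q' ∧ q' ≠ qv) :
    ∀ (σ : List (SI × SO)) (q : Q) (hq : q ≠ qv),
    (enfRun qv Tr henfco q hq σ).length = σ.length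
  | [], _, _ => rfl
  | a :: w, q, hq => by
    simp [enfRun, enfRun_length qv Tr henfco w]

theorem enfRun_prefix {Q SI SO : Type} (qv : Q) (Tr : Q → SI × SO → Q → Prop)
    (henfco : ∀ q : Q, q ≠ qv → ∃ a : SI × SO, ∃ q', Tr q a q' ∧ q' ≠ qv) :
    ∀ (σ τ : List (SI × SO)) (q : Q) (hq : q ≠ qv),
    enfRun qv Tr henfco q hq σ <+: enfRun qv Tr henfco q hq (σ ++ τ)
  | [], τ, q, hq => List.nil_prefix
  | a :: w, τ, q, hq => by
    simpa [enfRun] using enfRun_prefix qv Tr henfco w τ _ _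

/-- the enforceability condition implies existence of a sound,
monotone, instantaneous enforcer. -/
theorem stmt_4 {Q SI SO : Type} (q0 qv : Q)
    (Tr : Q → SI × SO → Q → Prop)
    (hdet : ∀ q a q' q'', Tr q a q' → Tr q a q'' → q' = q'')
    (hcomp : ∀ q a, ∃ q', Tr q a q')
    (htrap : ∀ a q', Tr qv a q' → q' = qv)
    (hreach : ∀ q : Q, ∃ w : List (SI × SO), TrW Tr q0 w q)
    (hq0 : q0 ≠ qv)
    (henfco : ∀ q : Q, q ≠ qv → ∃ a : SI × SO, ∃ q', Tr q a q' ∧ q' ≠ qv) :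
    ∃ E : List (SI × SO) → List (SI × SO),
      (∀ σ, ∃ q, TrW Tr q0 (E σ) q ∧ q ≠ qv) ∧
      (∀ σ σ', σ <+: σ' → E σ <+: E σ') ∧
      (∀ σ, (E σ).length = σ.length) := by
  refine ⟨fun σ => enfRun qv Tr henfco q0 hq0 σ, fun σ => enfRun_sound qv Tr henfco σ q0 hq0,
    ?_, fun σ => enfRun_length qv Tr henfco σ q0 hq0⟩
  rintro σ σ' ⟨τ, rfl⟩
  exact enfRun_prefix qv Tr henfco σ τ q0 hq0
end

section
/- Correctness of the synchronous enforcement algorithm: let A_φ be a deterministic complete safety automaton satisfying the enforceability condition, and define E* : Σ* → Σ* recursively by E*(ε) = ε and E*(σ·(x,y)) = E*(σ)·(x',y'), where, with q the state reached from q0 on E*(σ): x' = x if some non-qv state is reachable from q on input x in the input automaton, else x' is any element of editI(q); and y' = y if q →^{(x',y)} q' for some q' ≠ qv, else y' is any element of editO(q,x'). Then E* satisfies soundness (E*(σ) is accepted by A_φ for all σ), monotonicity, instantaneity (|E*(σ)| = |σ|), and transparency (E*(σ)·(x,y) accepted implies E*(σ·(x,y)) = E*(σ)·(x,y)). -/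
/-- Input-edit set. -/
def editI {Q SI SO : Type} (qv : Q) (Tr : Q → SI × SO → Q → Prop) (q : Q) : Set SI :=
  {x | ∃ q', q' ≠ qv ∧ ∃ y, Tr q (x, y) q'}

/-- Output-edit set. -/
def editO {Q SI SO : Type} (qv : Q) (Tr : Q → SI × SO → Q → Prop) (q : Q) (x : SI) : Set SO :=
  {y | ∃ q', q' ≠ qv ∧ Tr q (x, y) q'}

lemma TrW_snoc {Q A : Type} (Tr : Q → A → Q → Prop) (a : A) :
    ∀ (w : List A) (q q' q'' : Q), TrW Tr q w q' → Tr q' a q'' →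
      TrW Tr q (w ++ [a]) q''
  | [], q, q', q'', hw, h => by
      cases hw; exact ⟨q'', h, rfl⟩
  | b :: w, q, q', q'', ⟨p, hb, hw⟩, h =>
      ⟨p, hb, TrW_snoc Tr a w p q' q'' hw h⟩

lemma TrW_snoc_inv {Q A : Type} (Tr : Q → A → Q → Prop) (a : A) :
    ∀ (w : List A) (q q'' : Q), TrW Tr q (w ++ [a]) q'' →
      ∃ q', TrW Tr q w q' ∧ Tr q' a q''
  | [], q, q'', ⟨p, ha, hw⟩ => by cases hw; exact ⟨q, rfl, ha⟩
  | b :: w, q, q'', ⟨p, hb, hw⟩ => by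
      obtain ⟨q', h1, h2⟩ := TrW_snoc_inv Tr a w p q'' hw
      exact ⟨q', ⟨p, hb, h1⟩, h2⟩

lemma TrW_det {Q A : Type} (Tr : Q → A → Q → Prop)
    (hdet : ∀ q a q' q'', Tr q a q' → Tr q a q'' → q' = q'') :
    ∀ (w : List A) (q q' q'' : Q), TrW Tr q w q' → TrW Tr q w q'' → q' = q''
  | [], q, q', q'', h1, h2 => by cases h1; cases h2; rfl
  | a :: w, q, q', q'', ⟨p, hp, h1⟩, ⟨r, hr, h2⟩ => by
      cases hdet q a p r hp hr
      exact TrW_det Tr hdet w p q' q'' h1 h2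

/-- correctness of the enforcement algorithm: the function E*
satisfies soundness, monotonicity, instantaneity and transparency. -/
theorem stmt_8 {Q SI SO : Type} (q0 qv : Q)
    (Tr : Q → SI × SO → Q → Prop)
    (hdet : ∀ q a q' q'', Tr q a q' → Tr q a q'' → q' = q'')
    (hcomp : ∀ q a, ∃ q', Tr q a q')
    (htrap : ∀ a q', Tr qv a q' → q' = qv)
    (hq0 : q0 ≠ qv)
    (henfco : ∀ q : Q, q ≠ qv → ∃ a : SI × SO, ∃ q', Tr q a q' ∧ q' ≠ qv)
    (E : List (SI × SO) → List (SI × SO))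
    (hE0 : E [] = [])
    (hstep : ∀ (σ : List (SI × SO)) (x : SI) (y : SO) (q : Q), TrW Tr q0 (E σ) q →
      ∃ (x' : SI) (y' : SO),
        (x ∈ editI qv Tr q → x' = x) ∧
        (x ∉ editI qv Tr q → x' ∈ editI qv Tr q) ∧
        (y ∈ editO qv Tr q x' → y' = y) ∧
        (y ∉ editO qv Tr q x' → y' ∈ editO qv Tr q x') ∧
        E (σ ++ [(x, y)]) = E σ ++ [(x', y')]) :
    (∀ σ, ∃ q, TrW Tr q0 (E σ) q ∧ q ≠ qv) ∧
    (∀ σ σ', σ <+: σ' → E σ <+: E σ') ∧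
    (∀ σ, (E σ).length = σ.length) ∧
    (∀ σ (x : SI) (y : SO),
      (∃ q, TrW Tr q0 (E σ ++ [(x, y)]) q ∧ q ≠ qv) →
      E (σ ++ [(x, y)]) = E σ ++ [(x, y)]) := by
  have sound : ∀ σ, ∃ q, TrW Tr q0 (E σ) q ∧ q ≠ qv := by
    intro σ
    induction σ using List.reverseRecOn with
    | nil => exact ⟨q0, by simp [hE0, TrW], hq0⟩
    | append_singleton σ a ih =>
      obtain ⟨q, hq, hqn⟩ := ih
      obtain ⟨x', y', h1, h2, h3, h4, h5⟩ := hstep σ a.1 a.2 q hq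
      have hx' : x' ∈ editI qv Tr q := by
        by_cases hx : a.1 ∈ editI qv Tr q
        · rw [h1 hx]; exact hx
        · exact h2 hx
      have hy' : y' ∈ editO qv Tr q x' := by
        by_cases hy : a.2 ∈ editO qv Tr q x'
        · rw [h3 hy]; exact hy
        · exact h4 hy
      obtain ⟨q', hq'n, htr⟩ := hy'
      refine ⟨q', ?_, hq'n⟩
      have ha : σ ++ [a] = σ ++ [(a.1, a.2)] := by simp
      rw [ha, h5]
      exact TrW_snoc Tr (x', y') (E σ) q0 q q' hq htr
  have step : ∀ σ a, ∃ a', E (σ ++ [a]) = E σ ++ [a'] := by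
    intro σ a
    obtain ⟨q, hq, _⟩ := sound σ
    obtain ⟨x', y', _, _, _, _, h5⟩ := hstep σ a.1 a.2 q hq
    exact ⟨(x', y'), by simpa using h5⟩
  refine ⟨sound, ?_, ?_, ?_⟩
  · rintro σ σ' ⟨t, rfl⟩
    induction t using List.reverseRecOn with
    | nil => simp
    | append_singleton t a ih =>
      obtain ⟨a', h⟩ := step (σ ++ t) a
      rw [← List.append_assoc, h]
      exact ih.trans (List.prefix_append _ _)
  · intro σ
    induction σ using List.reverseRecOn with
    | nil => simp [hE0]
    | append_singleton σ a ih =>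
      obtain ⟨a', h⟩ := step σ a
      simp [h, ih]
  · rintro σ x y ⟨p, hp, hpn⟩
    obtain ⟨q, hq, hqn⟩ := sound σ
    obtain ⟨q1, hq1, htr⟩ := TrW_snoc_inv Tr (x, y) (E σ) q0 p hp
    cases TrW_det Tr hdet (E σ) q0 q1 q hq1 hq
    obtain ⟨x', y', h1, h2, h3, h4, h5⟩ := hstep σ x y q hq
    have hx : x ∈ editI qv Tr q := ⟨p, hpn, y, htr⟩
    have hx' := h1 hx
    subst hx'
    have hy : y ∈ editO qv Tr q x' := ⟨p, hpn, htr⟩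
    rw [h5, h3 hy]
end

section
/- The transformation algorithm for non-enforceable properties shrinks the language: if A' is obtained from a deterministic complete safety automaton A by merging into qv a non-violating state q (q ≠ q0) all of whose outgoing transitions lead to qv (i.e., redirecting all incoming transitions of q to qv and removing q), then L(A') ⊆ L(A), and moreover A' remains deterministic and complete with trap state qv. -/
/-- merging into qv a non-violating state whose outgoing
transitions all lead to qv shrinks the language, and preserves determinism,
completeness, and the trap property. -/
theorem stmt_12 {Q SI SO : Type} (q0 qv q : Q)
    (Tr : Q → SI × SO → Q → Prop)
    (hdet : ∀ p a p' p'', Tr p a p' → Tr p a p'' → p' = p'')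
    (hcomp : ∀ p a, ∃ p', Tr p a p')
    (htrap : ∀ a p', Tr qv a p' → p' = qv)
    (hq0 : q ≠ q0) (hqv : q ≠ qv)
    (hbad : ∀ a p', Tr q a p' → p' = qv)
    (Tr' : {p : Q // p ≠ q} → SI × SO → {p : Q // p ≠ q} → Prop)
    (hTr' : ∀ (p p' : {p : Q // p ≠ q}) a,
      Tr' p a p' ↔ (Tr p.1 a p'.1 ∧ p'.1 ≠ q) ∨ (Tr p.1 a q ∧ p'.1 = qv)) :
    (∀ w : List (SI × SO),
      (∃ p : {p : Q // p ≠ q}, TrW Tr' ⟨q0, Ne.symm hq0⟩ w p ∧ p.1 ≠ qv) →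
      (∃ p : Q, TrW Tr q0 w p ∧ p ≠ qv)) ∧
    (∀ p a p' p'', Tr' p a p' → Tr' p a p'' → p' = p'') ∧
    (∀ p a, ∃ p', Tr' p a p') ∧
    (∀ a p', Tr' ⟨qv, Ne.symm hqv⟩ a p' → p' = ⟨qv, Ne.symm hqv⟩) := by
  -- single-step trap property of Tr'
  have trap' : ∀ a (p' : {p : Q // p ≠ q}), Tr' ⟨qv, Ne.symm hqv⟩ a p' →
      p' = ⟨qv, Ne.symm hqv⟩ := by
    intro a p' h
    rcases (hTr' _ _ _).1 h with ⟨h1, _⟩ | ⟨h1, h2⟩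
    · exact Subtype.ext (htrap a p'.1 h1)
    · exact Subtype.ext h2
  -- words starting at qv end at qv
  have trapW : ∀ (w : List (SI × SO)) (p' : {p : Q // p ≠ q}),
      TrW Tr' ⟨qv, Ne.symm hqv⟩ w p' → p' = ⟨qv, Ne.symm hqv⟩ := by
    intro w
    induction w with
    | nil => intro p' h; exact h.symm
    | cons a w ih =>
      intro p' h
      rcases h with ⟨q'', h1, h2⟩
      rw [trap' a q'' h1] at h2
      exact ih p' h2
  -- simulation
  have sim : ∀ (w : List (SI × SO)) (p p' : {p : Q // p ≠ q}),
      TrW Tr' p w p' → p'.1 ≠ qv → TrW Tr p.1 w p'.1 := by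
    intro w
    induction w with
    | nil => intro p p' h _; exact congrArg Subtype.val h
    | cons a w ih =>
      intro p p' h hne
      rcases h with ⟨q'', h1, h2⟩
      rcases (hTr' _ _ _).1 h1 with ⟨h3, _⟩ | ⟨h3, h4⟩
      · exact ⟨q''.1, h3, ih q'' p' h2 hne⟩
      · exfalso
        have : q'' = ⟨qv, Ne.symm hqv⟩ := Subtype.ext h4
        rw [this] at h2
        exact hne (congrArg Subtype.val (trapW w p' h2))
  refine ⟨?_, ?_, ?_, trap'⟩
  · rintro w ⟨p, hw, hne⟩
    exact ⟨p.1, sim w _ p hw hne, hne⟩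
  · intro p a p' p'' h1 h2
    rcases (hTr' _ _ _).1 h1 with ⟨g1, g1'⟩ | ⟨g1, g1'⟩ <;>
      rcases (hTr' _ _ _).1 h2 with ⟨g2, g2'⟩ | ⟨g2, g2'⟩
    · exact Subtype.ext (hdet _ _ _ _ g1 g2)
    · exact absurd (hdet _ _ _ _ g1 g2) g1'
    · exact absurd (hdet _ _ _ _ g2 g1) g2'
    · exact Subtype.ext (g1'.trans g2'.symm)
  · intro p a
    rcases hcomp p.1 a with ⟨p', hp'⟩
    by_cases h : p' = q
    · exact ⟨⟨qv, Ne.symm hqv⟩, (hTr' _ _ _).2 (Or.inr ⟨h ▸ hp', rfl⟩)⟩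
    · exact ⟨⟨p', h⟩, (hTr' _ _ _).2 (Or.inl ⟨hp', h⟩)⟩
end
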